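/- arXiv:1803.05502 — 3 statements merged into one kernel-verified Lean document; each statement's English description precedes it below -/
import Mathlib

section
/- Let $\sigma > 0$ and $\lambda > 0$ be real numbers. Then for all $t \ge 0$, $\int_0^t e^{-\sigma(t-\tau)} (1+\tau)^{-\lambda} \, d\tau \le d_1(\lambda,\sigma) (1+t)^{-\lambda}$, where $d_1(\lambda,\sigma) = 2^{\lambda} \big[ ((\lambda+1)/(e\sigma))^{\lambda+1} e^{\sigma} + 1/\sigma \big]$. -/
open Real intervalIntegral

/-!
Split the integral at `t / 2`. On `[t / 2, t]` the weight is at most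
`(1 + t / 2)^{-λ} ≤ 2^λ (1 + t)^{-λ}` and the exponential integrates to at most `1 / σ`.
On `[0, t / 2]` the integrand is at most `e^{-σ t / 2}`, giving `(t / 2) e^{-σ t / 2}`, and the
maximum of `x^{λ+1} e^{-σ x / 2}` over `x > 0`, namely `(2 (λ + 1) / (e σ))^{λ+1}`, turns this
into a multiple of `(1 + t)^{-λ}` (applied at `x = 1 + t`, which costs the factor `e^{σ/2} ≤ e^σ`).
-/

/-- With `u = b x / a`, this is `u^a ≤ (e^{u-1})^a`. -/
theorem rpow_mul_exp_neg_mul_le {a b x : ℝ} (ha : 0 < a) (hb : 0 < b) (hx : 0 ≤ x) :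
    x ^ a * exp (-(b * x)) ≤ (a / (exp 1 * b)) ^ a := by
  set u := b * x / a
  have hu : 0 ≤ u := by positivity
  have hu_pow : u ^ a ≤ exp (b * x - a) := calc
    u ^ a ≤ exp (u - 1) ^ a := rpow_le_rpow hu (by linarith [add_one_le_exp (u - 1)]) ha.le
    _ = exp (b * x - a) := by rw [← exp_mul, sub_mul, one_mul, div_mul_cancel₀ _ ha.ne']
  have hx_pow : x ^ a = (a / b) ^ a * u ^ a := by
    rw [← mul_rpow (by positivity) hu]; congr 1; simp only [u]; field_simp
  have hbound : (a / (exp 1 * b)) ^ a = (a / b) ^ a * exp (-a) := by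
    rw [show a / (exp 1 * b) = a / b * (exp 1)⁻¹ by field_simp,
      mul_rpow (by positivity) (by positivity), inv_rpow (exp_pos 1).le, exp_one_rpow, exp_neg]
  calc x ^ a * exp (-(b * x)) = (a / b) ^ a * (u ^ a * exp (-(b * x))) := by rw [hx_pow]; ring
    _ ≤ (a / b) ^ a * (exp (b * x - a) * exp (-(b * x))) := by gcongr
    _ = (a / (exp 1 * b)) ^ a := by rw [hbound, ← exp_add]; ring_nf

theorem mul_exp_neg_mul_le {a b x : ℝ} (ha : 0 ≤ a) (hb : 0 < b) (hx : 0 < x) :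
    x * exp (-(b * x)) ≤ ((a + 1) / (exp 1 * b)) ^ (a + 1) * x ^ (-a) := by
  rw [rpow_neg hx.le, ← div_eq_mul_inv, le_div_iff₀ (by positivity), mul_right_comm, mul_comm x,
    ← rpow_add_one hx.ne']
  exact rpow_mul_exp_neg_mul_le (by linarith) hb hx.le

theorem integral_exp_neg_mul_sub {σ s t : ℝ} (hσ : σ ≠ 0) :
    ∫ τ in s..t, exp (-σ * (t - τ)) = (1 - exp (-σ * (t - s))) / σ := by
  have hderiv : ∀ τ ∈ Set.uIcc s t,
      HasDerivAt (fun y => exp (-σ * (t - y)) / σ) (exp (-σ * (t - τ))) τ := by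
    intro τ _
    have := ((((hasDerivAt_id' τ).const_sub t).const_mul (-σ)).exp).div_const σ
    refine this.congr_deriv ?_
    field_simp
  rw [integral_eq_sub_of_hasDerivAt hderiv ((by fun_prop : Continuous _).intervalIntegrable _ _)]
  simp [sub_div]

section

variable {σ lam t : ℝ}

theorem continuousOn_exp_mul_one_add_rpow :
    ContinuousOn (fun τ => exp (-σ * (t - τ)) * (1 + τ) ^ (-lam)) (Set.Ici 0) := by
  refine (by fun_prop : Continuous fun τ => exp (-σ * (t - τ))).continuousOn.mul ?_
  exact ContinuousOn.rpow_const (by fun_prop) fun τ hτ => Or.inl (by linarith [Set.mem_Ici.mp hτ])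

theorem intervalIntegrable_exp_mul_one_add_rpow {a b : ℝ} (ha : 0 ≤ a) (hb : 0 ≤ b) :
    IntervalIntegrable (fun τ => exp (-σ * (t - τ)) * (1 + τ) ^ (-lam)) MeasureTheory.volume a b :=
  (continuousOn_exp_mul_one_add_rpow.mono
    fun _ hx => Set.mem_Ici.mpr ((le_min ha hb).trans hx.1)).intervalIntegrable

theorem integral_exp_mul_one_add_rpow_le_head {s : ℝ} (hσ : 0 ≤ σ) (hlam : 0 ≤ lam) (hs : 0 ≤ s) :
    ∫ τ in (0:ℝ)..s, exp (-σ * (t - τ)) * (1 + τ) ^ (-lam) ≤ s * exp (-σ * (t - s)) := by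
  have hmono := integral_mono_on hs (intervalIntegrable_exp_mul_one_add_rpow le_rfl hs)
    intervalIntegrable_const fun τ (hτ : τ ∈ Set.Icc 0 s) => calc
      exp (-σ * (t - τ)) * (1 + τ) ^ (-lam) ≤ exp (-σ * (t - τ)) * 1 := by
        gcongr
        exact rpow_le_one_of_one_le_of_nonpos (by linarith [hτ.1]) (by linarith)
      _ ≤ exp (-σ * (t - s)) := by rw [mul_one]; exact exp_le_exp.mpr (by nlinarith [hτ.2])
  simpa using hmono

theorem integral_exp_mul_one_add_rpow_le_tail {s : ℝ} (hσ : 0 < σ) (hlam : 0 ≤ lam) (hs : 0 ≤ s)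
    (hst : s ≤ t) :
    ∫ τ in s..t, exp (-σ * (t - τ)) * (1 + τ) ^ (-lam) ≤ (1 + s) ^ (-lam) / σ := calc
  _ ≤ ∫ τ in s..t, exp (-σ * (t - τ)) * (1 + s) ^ (-lam) := by
    refine integral_mono_on hst (intervalIntegrable_exp_mul_one_add_rpow hs (hs.trans hst))
      ((by fun_prop : Continuous _).intervalIntegrable _ _) fun τ hτ => ?_
    exact mul_le_mul_of_nonneg_left
      (rpow_le_rpow_of_nonpos (by linarith) (by linarith [hτ.1]) (by linarith)) (exp_pos _).le
  _ = (1 - exp (-σ * (t - s))) / σ * (1 + s) ^ (-lam) := by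
    rw [integral_mul_const, integral_exp_neg_mul_sub hσ.ne']
  _ ≤ 1 / σ * (1 + s) ^ (-lam) := by gcongr; linarith [exp_pos (-σ * (t - s))]
  _ = (1 + s) ^ (-lam) / σ := by ring

end

theorem one_add_half_rpow_neg_le {lam t : ℝ} (hlam : 0 ≤ lam) (ht : 0 ≤ t) :
    (1 + t / 2) ^ (-lam) ≤ 2 ^ lam * (1 + t) ^ (-lam) := calc
  (1 + t / 2) ^ (-lam) ≤ ((1 + t) / 2) ^ (-lam) :=
    rpow_le_rpow_of_nonpos (by linarith) (by linarith) (by linarith)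
  _ = 2 ^ lam * (1 + t) ^ (-lam) := by
    rw [div_rpow (by linarith) zero_le_two, rpow_neg zero_le_two, div_inv_eq_mul, mul_comm]

theorem half_mul_exp_neg_half_le {σ lam t : ℝ} (hσ : 0 < σ) (hlam : 0 ≤ lam) (ht : 0 ≤ t) :
    t / 2 * exp (-σ * (t - t / 2)) ≤
      2 ^ lam * (((lam + 1) / (exp 1 * σ)) ^ (lam + 1) * exp σ) * (1 + t) ^ (-lam) := calc
  t / 2 * exp (-σ * (t - t / 2)) = t / 2 * exp (-(σ / 2 * (1 + t))) * exp (σ / 2) := by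
    rw [mul_assoc, ← exp_add]; ring_nf
  _ ≤ (1 + t) / 2 * exp (-(σ / 2 * (1 + t))) * exp σ := by gcongr <;> linarith
  _ ≤ ((lam + 1) / (exp 1 * (σ / 2))) ^ (lam + 1) * (1 + t) ^ (-lam) / 2 * exp σ := by
    gcongr ?_ * _
    rw [div_mul_eq_mul_div]
    exact div_le_div_of_nonneg_right
      (mul_exp_neg_mul_le hlam (half_pos hσ) (by linarith)) zero_le_two
  _ = 2 ^ lam * (((lam + 1) / (exp 1 * σ)) ^ (lam + 1) * exp σ) * (1 + t) ^ (-lam) := by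
    rw [show (lam + 1) / (exp 1 * (σ / 2)) = 2 * ((lam + 1) / (exp 1 * σ)) by field_simp,
      mul_rpow zero_le_two (by positivity), rpow_add_one two_ne_zero]
    ring

/-- For `σ > 0`, `λ > 0` and all `t ≥ 0`,
`∫_0^t e^{-σ(t-τ)} (1+τ)^{-λ} dτ ≤ d₁(λ,σ) (1+t)^{-λ}`, where
`d₁(λ,σ) = 2^λ [ ((λ+1)/(e σ))^{λ+1} e^σ + 1/σ ]`. -/
theorem stmt2 (σ lam : ℝ) (hσ : 0 < σ) (hlam : 0 < lam) :
    ∀ t : ℝ, 0 ≤ t →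
      (∫ τ in (0:ℝ)..t, Real.exp (-σ * (t - τ)) * (1 + τ) ^ (-lam))
        ≤ (2:ℝ) ^ lam * (((lam + 1) / (Real.exp 1 * σ)) ^ (lam + 1) * Real.exp σ + 1 / σ)
            * (1 + t) ^ (-lam) := by
  intro t ht
  have ht2 : 0 ≤ t / 2 := by linarith
  rw [← integral_add_adjacent_intervals (intervalIntegrable_exp_mul_one_add_rpow le_rfl ht2)
    (intervalIntegrable_exp_mul_one_add_rpow ht2 ht)]
  calc _ ≤ t / 2 * exp (-σ * (t - t / 2)) + (1 + t / 2) ^ (-lam) / σ :=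
        add_le_add (integral_exp_mul_one_add_rpow_le_head hσ.le hlam.le ht2)
          (integral_exp_mul_one_add_rpow_le_tail hσ hlam.le ht2 (by linarith))
    _ ≤ 2 ^ lam * (((lam + 1) / (exp 1 * σ)) ^ (lam + 1) * exp σ) * (1 + t) ^ (-lam)
          + 2 ^ lam * (1 + t) ^ (-lam) / σ :=
        add_le_add (half_mul_exp_neg_half_le hσ hlam.le ht)
          (div_le_div_of_nonneg_right (one_add_half_rpow_neg_le hlam.le ht) hσ.le)
    _ = _ := by ring
end

section
/- Let $\varepsilon \in (0,1)$, $\lambda > 0$, $M > 0$. Let $f : [0,\infty) \to \mathbb{R}$ be a measurable function satisfying $|f(\tau)| \le M (1+\tau)^{-\lambda}$ for almost every $\tau \ge 0$. Then for every real $a \ge 1$ and every $t > 0$, $\int_{t/2}^{t} a^{1-\varepsilon} e^{-(t-\tau) a} |f(\tau)| \, d\tau \le M \big( (1-\varepsilon)/e \big)^{1-\varepsilon} \, 2^{1 - 2\varepsilon + \lambda} \big( \varepsilon^{-1} + 4 e^{-1/4} \big) (1+t)^{-\lambda}$. -/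
open Real MeasureTheory intervalIntegral

/-! On `[t/2, t]` the decay hypothesis gives `|f τ| ≤ M 2^λ (1+t)^{-λ}`, while for `a ≥ 1`
the kernel has mass `∫_{t/2}^{t} a^{1-ε} e^{-(t-τ)a} dτ ≤ a^{-ε} ≤ 1`. It remains to see that the
constant `((1-ε)/e)^{1-ε} 2^{1-2ε} (ε⁻¹ + 4e^{-1/4})` is at least `1`: with `x = 1 - ε`, the
minimum `-1/e` of `x log x` bounds its first two factors below by `1/4`, and the last factor
exceeds `4`. -/

lemma neg_exp_neg_one_le_mul_log {x : ℝ} (hx : 0 ≤ x) : -exp (-1) ≤ x * log x := by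
  rcases hx.eq_or_lt with rfl | hx
  · simp [(exp_pos _).le]
  have h := self_sub_one_le_mul_log (mul_pos hx (exp_pos 1)).le
  rw [log_mul hx.ne' (exp_pos 1).ne', log_exp] at h
  have hmin : -1 ≤ exp 1 * (x * log x) := by linarith
  calc -exp (-1) = exp (-1) * -1 := by ring
    _ ≤ exp (-1) * (exp 1 * (x * log x)) := mul_le_mul_of_nonneg_left hmin (exp_pos _).le
    _ = x * log x := by rw [← mul_assoc, ← exp_add]; simp

lemma quarter_le_rpow_mul_two_rpow {x : ℝ} (hx : 0 < x) :
    1 / 4 ≤ (x / exp 1) ^ x * (2 : ℝ) ^ (2 * x - 1) := by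
  have hexp : (x / exp 1) ^ x * (2 : ℝ) ^ (2 * x - 1)
      = exp (x * log x - x + (2 * x - 1) * log 2) := by
    rw [rpow_def_of_pos (div_pos hx (exp_pos 1)), rpow_def_of_pos two_pos, ← exp_add,
      log_div hx.ne' (exp_pos 1).ne', log_exp]
    ring_nf
  have hquarter : (1 / 4 : ℝ) = exp (-(log 2 + log 2)) := by
    rw [exp_neg, exp_add, exp_log two_pos]; norm_num
  have hmul_log : -(1 / 2) ≤ x * log x := by
    have he : 2 ≤ exp 1 := by linarith [add_one_le_exp 1]
    have : exp (-1) ≤ 1 / 2 := by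
      rw [exp_neg, one_div]; exact inv_anti₀ two_pos he
    linarith [neg_exp_neg_one_le_mul_log hx.le]
  have hlog2 : 1 / 2 < log 2 := by linarith [log_two_gt_d9]
  rw [hexp, hquarter, exp_le_exp]
  nlinarith [mul_nonneg hx.le (by linarith : (0 : ℝ) ≤ 2 * log 2 - 1)]

lemma one_le_smoothing_constant {ε : ℝ} (h0 : 0 < ε) (h1 : ε < 1) :
    1 ≤ ((1 - ε) / exp 1) ^ (1 - ε) * (2 : ℝ) ^ (1 - 2 * ε) * (ε⁻¹ + 4 * exp (-(1 / 4))) := by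
  have hquarter := quarter_le_rpow_mul_two_rpow (sub_pos.mpr h1)
  rw [show 2 * (1 - ε) - 1 = 1 - 2 * ε by ring] at hquarter
  have hinv : 1 ≤ ε⁻¹ := (one_le_inv₀ h0).mpr h1.le
  have hexp : 3 / 4 ≤ exp (-(1 / 4)) := by linarith [add_one_le_exp (-(1 / 4))]
  calc (1 : ℝ) = 1 / 4 * 4 := by norm_num
    _ ≤ _ := mul_le_mul hquarter (by linarith) (by norm_num) (by positivity)

lemma integral_exp_neg_sub_mul (a s t : ℝ) (ha : a ≠ 0) :
    ∫ τ in s..t, exp (-((t - τ) * a)) = a⁻¹ * (1 - exp (-((t - s) * a))) := by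
  rw [integral_comp_sub_left (fun u ↦ exp (-(u * a))) t]
  simp only [neg_mul_eq_mul_neg, mul_comm _ (-a)]
  rw [integral_comp_mul_left exp (neg_ne_zero.mpr ha), integral_exp, smul_eq_mul,
    sub_self, mul_zero, exp_zero, inv_neg]
  ring

lemma integral_rpow_mul_exp_neg_sub_mul_le_one {a ε s t : ℝ} (ha : 1 ≤ a) (hε : 0 ≤ ε)
    (hst : s ≤ t) : ∫ τ in s..t, a ^ (1 - ε) * exp (-((t - τ) * a)) ≤ 1 := by
  have ha0 : 0 < a := by linarith
  rw [intervalIntegral.integral_const_mul, integral_exp_neg_sub_mul a s t ha0.ne', ← mul_assoc,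
    ← rpow_neg_one a, ← rpow_add ha0, show 1 - ε + -1 = -ε by ring]
  have hexp_le : exp (-((t - s) * a)) ≤ 1 := exp_le_one_iff.mpr (by nlinarith)
  exact mul_le_one₀ (rpow_le_one_of_one_le_of_nonpos ha (neg_nonpos.mpr hε)) (by linarith)
    (by linarith [exp_pos (-((t - s) * a))])

lemma integral_rpow_mul_exp_neg_sub_mul_mul_abs_le {a ε s t C : ℝ} {f : ℝ → ℝ} (ha : 1 ≤ a)
    (hε : 0 ≤ ε) (hst : s ≤ t) (hC : 0 ≤ C) (hf : ∀ᵐ τ, τ ∈ Set.Ioc s t → |f τ| ≤ C) :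
    ∫ τ in s..t, a ^ (1 - ε) * exp (-((t - τ) * a)) * |f τ| ≤ C := by
  have hkernel : Continuous fun τ ↦ a ^ (1 - ε) * exp (-((t - τ) * a)) := by fun_prop
  calc ∫ τ in s..t, a ^ (1 - ε) * exp (-((t - τ) * a)) * |f τ|
      ≤ ‖∫ τ in s..t, a ^ (1 - ε) * exp (-((t - τ) * a)) * |f τ|‖ := le_norm_self _
    _ ≤ ∫ τ in s..t, C * (a ^ (1 - ε) * exp (-((t - τ) * a))) := by
        refine norm_integral_le_of_norm_le hst ?_ ((hkernel.const_mul C).intervalIntegrable _ _)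
        filter_upwards [hf] with τ hτ hmem
        have hk : 0 ≤ a ^ (1 - ε) * exp (-((t - τ) * a)) := by positivity
        rw [norm_mul, norm_of_nonneg hk, norm_of_nonneg (abs_nonneg _), mul_comm C]
        exact mul_le_mul_of_nonneg_left (hτ hmem) hk
    _ = C * ∫ τ in s..t, a ^ (1 - ε) * exp (-((t - τ) * a)) :=
        intervalIntegral.integral_const_mul _ _
    _ ≤ C * 1 := mul_le_mul_of_nonneg_left (integral_rpow_mul_exp_neg_sub_mul_le_one ha hε hst) hC
    _ = C := mul_one C

lemma rpow_neg_le_two_rpow_mul_rpow_neg {y z p : ℝ} (hy : 0 < y) (hyz : y / 2 ≤ z) (hp : 0 ≤ p) :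
    z ^ (-p) ≤ 2 ^ p * y ^ (-p) :=
  calc z ^ (-p) ≤ (y / 2) ^ (-p) := rpow_le_rpow_of_nonpos (by positivity) hyz (neg_nonpos.mpr hp)
    _ = 2 ^ p * y ^ (-p) := by
      rw [div_rpow hy.le zero_le_two, rpow_neg zero_le_two, div_inv_eq_mul, mul_comm]

theorem stmt7_general (ε lam M : ℝ) (hε : ε ∈ Set.Ioo (0:ℝ) 1) (hlam : 0 < lam) (hM : 0 < M)
    (f : ℝ → ℝ)
    (hfb : ∀ᵐ τ ∂(volume : Measure ℝ), 0 ≤ τ → |f τ| ≤ M * (1 + τ) ^ (-lam)) :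
    ∀ a : ℝ, 1 ≤ a → ∀ t : ℝ, 0 < t →
      (∫ τ in (t/2)..t, a ^ (1 - ε) * Real.exp (-((t - τ) * a)) * |f τ|)
        ≤ M * ((1 - ε) / Real.exp 1) ^ (1 - ε) * (2:ℝ) ^ (1 - 2 * ε + lam)
            * (ε⁻¹ + 4 * Real.exp (-(1/4))) * (1 + t) ^ (-lam) := by
  intro a ha t ht
  have hdecay : ∀ᵐ τ, τ ∈ Set.Ioc (t / 2) t → |f τ| ≤ M * 2 ^ lam * (1 + t) ^ (-lam) := by
    filter_upwards [hfb] with τ hτ hmem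
    calc |f τ| ≤ M * (1 + τ) ^ (-lam) := hτ (by linarith [hmem.1])
      _ ≤ M * (2 ^ lam * (1 + t) ^ (-lam)) := mul_le_mul_of_nonneg_left
          (rpow_neg_le_two_rpow_mul_rpow_neg (by linarith) (by linarith [hmem.1]) hlam.le) hM.le
      _ = M * 2 ^ lam * (1 + t) ^ (-lam) := by ring
  calc _ ≤ M * 2 ^ lam * (1 + t) ^ (-lam) :=
        integral_rpow_mul_exp_neg_sub_mul_mul_abs_le ha hε.1.le (by linarith) (by positivity) hdecay
    _ ≤ M * 2 ^ lam * (1 + t) ^ (-lam) * (((1 - ε) / exp 1) ^ (1 - ε) * (2 : ℝ) ^ (1 - 2 * ε)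
          * (ε⁻¹ + 4 * exp (-(1 / 4)))) :=
        le_mul_of_one_le_right (by positivity) (one_le_smoothing_constant hε.1 hε.2)
    _ = _ := by rw [rpow_add two_pos]; ring

/-- Let `ε ∈ (0,1)`, `λ > 0`, `M > 0`, and `f` measurable with
`|f τ| ≤ M (1+τ)^{-λ}` for a.e. `τ ≥ 0`. Then for every `a ≥ 1` and every `t > 0`,
`∫_{t/2}^{t} a^{1-ε} e^{-(t-τ) a} |f τ| dτ
  ≤ M ((1-ε)/e)^{1-ε} 2^{1-2ε+λ} (ε⁻¹ + 4 e^{-1/4}) (1+t)^{-λ}`. -/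
theorem stmt7 (ε lam M : ℝ) (hε : ε ∈ Set.Ioo (0:ℝ) 1) (hlam : 0 < lam) (hM : 0 < M)
    (f : ℝ → ℝ) (hf : Measurable f)
    (hfb : ∀ᵐ τ ∂(volume : Measure ℝ), 0 ≤ τ → |f τ| ≤ M * (1 + τ) ^ (-lam)) :
    ∀ a : ℝ, 1 ≤ a → ∀ t : ℝ, 0 < t →
      (∫ τ in (t/2)..t, a ^ (1 - ε) * Real.exp (-((t - τ) * a)) * |f τ|)
        ≤ M * ((1 - ε) / Real.exp 1) ^ (1 - ε) * (2:ℝ) ^ (1 - 2 * ε + lam)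
            * (ε⁻¹ + 4 * Real.exp (-(1/4))) * (1 + t) ^ (-lam) :=
  stmt7_general ε lam M hε hlam hM f hfb
end

section
/- Let $(c_n)_{n \ge 1}$ be a sequence of nonnegative real numbers, and define $d_n = \max\{ c_k c_{n-k} : 1 \le k \le n-1 \}$ for $n \ge 2$. Assume $\sum_{n=2}^{\infty} n \, d_n < \infty$ and that $c_{n_0} > 0$ for some index $n_0 \ge 1$. Then $\sum_{n=1}^{\infty} n \, c_n < \infty$; in particular $\sum_{n=1}^{\infty} c_n < \infty$. -/
/-! Fixing one index `n₀` with `c n₀ > 0`, every term satisfies `c n₀ * c n ≤ d (n₀ + n)`,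
so `n * c n ≤ (n₀ + n) * d (n₀ + n) / c n₀`, and the summability of `∑ n d_n` transfers to
`∑ n c_n` by comparison. -/

lemma mul_le_of_isGreatest_mul_pairs {c : ℕ → ℝ} {k l : ℕ} {D : ℝ}
    (hD : IsGreatest {x : ℝ | ∃ j : ℕ, 1 ≤ j ∧ j ≤ k + l - 1 ∧ x = c j * c (k + l - j)} D)
    (hk : 1 ≤ k) (hl : 1 ≤ l) : c k * c l ≤ D :=
  hD.2 ⟨k, hk, by omega, by rw [Nat.add_sub_cancel_left]⟩

lemma summable_of_const_mul_le_shift {f g : ℕ → ℝ} {a : ℝ} (ha : 0 < a) (hf : ∀ n, 0 ≤ f n)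
    (hg : Summable g) (m : ℕ) (hfg : ∀ n, a * f n ≤ g (n + m)) : Summable f :=
  ((summable_nat_add_iff m).2 hg).div_const a |>.of_nonneg_of_le hf
    fun n => (le_div_iff₀' ha).2 (hfg n)

/-- Let `(c_n)_{n≥1}` be nonnegative, `d_n = max{ c_k c_{n-k} : 1 ≤ k ≤ n-1 }` for `n ≥ 2`
(encoded as `IsGreatest`). If `∑_{n≥2} n d_n < ∞` and `c_{n₀} > 0` for some `n₀ ≥ 1`, then
`∑_{n≥1} n c_n < ∞`; in particular `∑_{n≥1} c_n < ∞`. -/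
theorem stmt13 (c : ℕ → ℝ) (hcnn : ∀ n : ℕ, 1 ≤ n → 0 ≤ c n)
    (d : ℕ → ℝ)
    (hd : ∀ n : ℕ, 2 ≤ n →
      IsGreatest {x : ℝ | ∃ k : ℕ, 1 ≤ k ∧ k ≤ n - 1 ∧ x = c k * c (n - k)} (d n))
    (hsum : Summable (fun n : ℕ => ((n : ℝ) + 2) * d (n + 2)))
    (n₀ : ℕ) (hn₀ : 1 ≤ n₀) (hpos : 0 < c n₀) :
    Summable (fun n : ℕ => ((n : ℝ) + 1) * c (n + 1)) ∧
      Summable (fun n : ℕ => c (n + 1)) := by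
  obtain ⟨m, rfl⟩ : ∃ m, n₀ = m + 1 := ⟨n₀ - 1, by omega⟩
  have hc (n : ℕ) : 0 ≤ c (n + 1) := hcnn (n + 1) n.succ_pos
  have hweighted : Summable (fun n : ℕ => ((n : ℝ) + 1) * c (n + 1)) := by
    refine summable_of_const_mul_le_shift hpos (fun n => mul_nonneg (by positivity) (hc n))
      hsum m fun n => ?_
    have hkey : c (m + 1) * c (n + 1) ≤ d (n + m + 2) := by
      rw [show n + m + 2 = m + 1 + (n + 1) by omega]
      exact mul_le_of_isGreatest_mul_pairs (hd _ (by omega)) hn₀ n.succ_pos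
    have hd_nonneg : 0 ≤ d (n + m + 2) := (mul_nonneg hpos.le (hc n)).trans hkey
    calc c (m + 1) * (((n : ℝ) + 1) * c (n + 1))
        = ((n : ℝ) + 1) * (c (m + 1) * c (n + 1)) := by ring
      _ ≤ ((n : ℝ) + 1) * d (n + m + 2) := by gcongr
      _ ≤ (((n + m : ℕ) : ℝ) + 2) * d (n + m + 2) := by
          gcongr ?_ * _
          push_cast
          linarith [m.cast_nonneg (α := ℝ)]
  refine ⟨hweighted, hweighted.of_nonneg_of_le hc fun n => ?_⟩
  nlinarith [hc n, n.cast_nonneg (α := ℝ)]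
end
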